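/- arXiv:2409.18619 — 3 statements merged into one kernel-verified Lean document; each statement's English description precedes it below -/
import Mathlib

section
/- In the category of frames, pushouts preserve onto frame homomorphisms: if f : A → B is a surjective frame homomorphism and g : A → C is any frame homomorphism, then the pushout of f along g is a surjective frame homomorphism. -/
/-! The range of `f'` is a subframe of `P`, and it contains the range of `g'` because `f` is onto
and the square commutes. A pushout is generated by the images of its two legs: corestricting both
legs to a subframe containing them, the universal property yields a retraction of `P` onto that
subframe, which is the identity by uniqueness of the mediating map. -/

open Order

/-- `f' : C → P` and `g' : B → P` form a pushout square over `f : A → B` and `g : A → C`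
in the category of frames: `f'` is the pushout of `f` along `g`. -/
def IsPushoutSquare {A B C P : Type} [Order.Frame A] [Order.Frame B] [Order.Frame C]
    [Order.Frame P] (f : FrameHom A B) (g : FrameHom A C)
    (f' : FrameHom C P) (g' : FrameHom B P) : Prop :=
  g'.comp f = f'.comp g ∧
    ∀ (Q : Type) [Order.Frame Q] (u : FrameHom B Q) (v : FrameHom C Q),
      u.comp f = v.comp g → ∃! k : FrameHom P Q, k.comp g' = u ∧ k.comp f' = v

open Set

structure Subframe (α : Type*) [Frame α] where
  carrier : Set α
  infClosed' : InfClosed carrier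
  top_mem' : ⊤ ∈ carrier
  sSup_mem' : ∀ ⦃s : Set α⦄, s ⊆ carrier → sSup s ∈ carrier

namespace Subframe

variable {α : Type*} [Frame α]

instance : SetLike (Subframe α) α where
  coe L := L.carrier
  coe_injective L M h := by cases L; cases M; congr

variable {L : Subframe α}

instance : Min L := ⟨fun a b => ⟨a ⊓ b, L.infClosed' a.2 b.2⟩⟩

instance : Top L := ⟨⟨⊤, L.top_mem'⟩⟩

instance : SupSet L := ⟨fun s => ⟨sSup ((↑) '' s), L.sSup_mem' image_val_subset⟩⟩

@[simp] theorem coe_inf (a b : L) : (↑(a ⊓ b) : α) = a ⊓ b := rfl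

@[simp] theorem coe_sSup (s : Set L) : (↑(sSup s) : α) = sSup ((↑) '' s) := rfl

theorem isLUB_sSup (s : Set L) : IsLUB s (sSup s) :=
  .of_image (f := ((↑) : L → α)) Iff.rfl (_root_.isLUB_sSup _)

instance : CompleteLattice L where
  __ := completeLatticeOfSup L isLUB_sSup
  inf := (· ⊓ ·)
  le_inf _ _ _ := le_inf (α := α)
  inf_le_left _ _ := inf_le_left (α := α)
  inf_le_right _ _ := inf_le_right (α := α)
  top := ⊤
  le_top _ := le_top (α := α)

instance : Frame L :=
  .ofMinimalAxioms <| Function.frameMinimalAxioms (.of (α := α)) ((↑) : L → α) Iff.rfl coe_inf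
    fun s => (coe_sSup s).trans sSup_image

variable (L) in
def subtype : FrameHom L α where
  toFun := (↑)
  map_inf' _ _ := rfl
  map_top' := rfl
  map_sSup' _ := rfl

theorem subtype_injective : Function.Injective L.subtype := Subtype.coe_injective

end Subframe

namespace FrameHom

variable {α β : Type*} [Frame α] [Frame β]

def codRestrict (f : FrameHom α β) (L : Subframe β) (h : ∀ a, f a ∈ L) : FrameHom α L where
  toFun a := ⟨f a, h a⟩
  map_inf' a b := Subtype.ext (map_inf f a b)
  map_top' := Subtype.ext (map_top f)
  map_sSup' s := Subtype.ext <| by simp [Set.image_image]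

def range (f : FrameHom α β) : Subframe β where
  carrier := Set.range f
  infClosed' := by rintro _ ⟨a, rfl⟩ _ ⟨b, rfl⟩; exact ⟨a ⊓ b, map_inf f a b⟩
  top_mem' := ⟨⊤, map_top f⟩
  sSup_mem' s hs := ⟨sSup (f ⁻¹' s), by rw [map_sSup, image_preimage_eq_of_subset hs]⟩

end FrameHom

namespace IsPushoutSquare

variable {A B C P : Type} [Frame A] [Frame B] [Frame C] [Frame P]
  {f : FrameHom A B} {g : FrameHom A C} {f' : FrameHom C P} {g' : FrameHom B P}

theorem hom_ext (hpo : IsPushoutSquare f g f' g') {Q : Type} [Frame Q] {k₁ k₂ : FrameHom P Q}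
    (hg' : k₁.comp g' = k₂.comp g') (hf' : k₁.comp f' = k₂.comp f') : k₁ = k₂ := by
  have hcomm : (k₂.comp g').comp f = (k₂.comp f').comp g := by
    rw [FrameHom.comp_assoc, hpo.1, FrameHom.comp_assoc]
  obtain ⟨_, _, huniq⟩ := hpo.2 Q _ _ hcomm
  exact (huniq k₁ ⟨hg', hf'⟩).trans (huniq k₂ ⟨rfl, rfl⟩).symm

theorem mem_of_forall_mem (hpo : IsPushoutSquare f g f' g') (L : Subframe P)
    (hg' : ∀ b, g' b ∈ L) (hf' : ∀ c, f' c ∈ L) (p : P) : p ∈ L := by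
  have hcomm : (g'.codRestrict L hg').comp f = (f'.codRestrict L hf').comp g :=
    (FrameHom.cancel_left Subframe.subtype_injective).1 hpo.1
  obtain ⟨k, ⟨hkg', hkf'⟩, -⟩ := hpo.2 L _ _ hcomm
  have hk : L.subtype.comp k = FrameHom.id P :=
    hpo.hom_ext (by rw [FrameHom.comp_assoc, hkg']; rfl) (by rw [FrameHom.comp_assoc, hkf']; rfl)
  have hkp : (k p : P) = p := DFunLike.congr_fun hk p
  exact hkp ▸ (k p).2

end IsPushoutSquare

/-- In the category of frames, pushouts preserve onto frame homomorphisms. -/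
theorem pushout_preserves_surjective {A B C P : Type} [Order.Frame A] [Order.Frame B]
    [Order.Frame C] [Order.Frame P] (f : FrameHom A B) (g : FrameHom A C)
    (f' : FrameHom C P) (g' : FrameHom B P)
    (hpo : IsPushoutSquare f g f' g') (hf : Function.Surjective f) :
    Function.Surjective f' := by
  have hg' : ∀ b, g' b ∈ f'.range := by
    intro b
    obtain ⟨a, rfl⟩ := hf b
    exact ⟨g a, (DFunLike.congr_fun hpo.1 a).symm⟩
  exact hpo.mem_of_forall_mem f'.range hg' (fun c => ⟨c, rfl⟩)
end

section
/- (Isbell's Density Theorem) For any frame L and any dense surjective frame homomorphism f : L → S, there exists a (unique) frame homomorphism h : S → 𝔅(L) with h ∘ f = β_L; that is, the Booleanization is the smallest dense sublocale of L. -/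
open Heyting

/-- **Isbell's Density Theorem.** For any frame `L` and any dense surjective frame
homomorphism `f : L → S`, there is a unique map `h : S → 𝔅(L)` into the Booleanization
(the complete Boolean algebra of regular elements, with meets inherited from `L` and joins
`⋁_𝔅 A = (⋁ A)ᶜᶜ`) which is a frame homomorphism for this structure and satisfies
`h ∘ f = β_L`; that is, the Booleanization is the smallest dense sublocale of `L`. -/
theorem isbell_density {L S : Type} [Order.Frame L] [Order.Frame S]
    (f : FrameHom L S) (hsurj : Function.Surjective f)
    (hdense : ∀ a : L, f a = ⊥ → a = ⊥) :
    ∃! h : S → Heyting.Regular L,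
      (∀ s t : S, h (s ⊓ t) = h s ⊓ h t) ∧
      (h ⊤ = ⊤) ∧
      (∀ A : Set S, (h (sSup A) : L) = (sSup ((fun s => (h s : L)) '' A))ᶜᶜ) ∧
      (∀ a : L, h (f a) = Heyting.Regular.toRegular a) := by
  classical
  -- right adjoint of f
  set g : S → L := fun s => sSup {a : L | f a ≤ s} with hg
  have hgle : ∀ {a : L} {s : S}, f a ≤ s → a ≤ g s := fun {a s} h => le_sSup h
  have hfg : ∀ s : S, f (g s) = s := by
    intro s
    obtain ⟨b, rfl⟩ := hsurj s
    apply le_antisymm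
    · rw [hg]
      simp only [map_sSup]
      exact sSup_le (by rintro x ⟨a, ha, rfl⟩; exact ha)
    · exact OrderHomClass.mono f (hgle le_rfl)
  -- density lemma
  have key : ∀ {a b : L}, f a ≤ f b → a ≤ bᶜᶜ := by
    intro a b hab
    have h1 : f (a ⊓ bᶜ) = ⊥ := by
      rw [map_inf]
      have h2 : f b ⊓ f bᶜ = ⊥ := by rw [← map_inf, inf_compl_self, map_bot]
      exact le_bot_iff.mp (le_trans (inf_le_inf_right _ hab) h2.le)
    have h3 : a ⊓ bᶜ = ⊥ := hdense _ h1
    rw [le_compl_iff_disjoint_right, disjoint_iff]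
    exact h3
  refine ⟨fun s => Heyting.Regular.toRegular (g s), ⟨?_, ?_, ?_, ?_⟩, ?_⟩
  · -- meets
    intro s t
    apply Heyting.Regular.coe_injective
    rw [Heyting.Regular.coe_inf]
    simp only [Heyting.Regular.coe_toRegular]
    have hgi : g (s ⊓ t) = g s ⊓ g t := by
      apply le_antisymm
      · exact le_inf (hgle (le_trans (hfg _).le inf_le_left))
          (hgle (le_trans (hfg _).le inf_le_right))
      · exact hgle (by rw [map_inf]; exact inf_le_inf ((hfg s).le) ((hfg t).le))
    rw [hgi, compl_compl_inf_distrib]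
  · -- top
    apply Heyting.Regular.coe_injective
    have : g ⊤ = ⊤ := le_antisymm le_top (hgle le_top)
    simp [this]
  · -- sups
    intro A
    simp only [Heyting.Regular.coe_toRegular]
    set u : L := sSup ((fun s => ((g s)ᶜᶜ : L)) '' A) with hu
    apply le_antisymm
    · -- g (sSup A) ≤ uᶜᶜ  hence compl_compl ≤
      have hmem : ∀ s ∈ A, f uᶜ ⊓ s = ⊥ := by
        intro s hs
        have h1 : (g s)ᶜᶜ ≤ u := le_sSup ⟨s, hs, rfl⟩
        have h2 : uᶜ ⊓ g s = ⊥ := by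
          have : uᶜ ≤ (g s)ᶜ := by
            calc uᶜ ≤ ((g s)ᶜᶜ)ᶜ := compl_le_compl h1
            _ = (g s)ᶜ := compl_compl_compl _
          rw [le_compl_iff_disjoint_right, disjoint_iff] at this
          exact this
        calc f uᶜ ⊓ s = f uᶜ ⊓ f (g s) := by rw [hfg]
          _ = f (uᶜ ⊓ g s) := (map_inf f _ _).symm
          _ = ⊥ := by rw [h2, map_bot]
      have h3 : f (g (sSup A) ⊓ uᶜ) = ⊥ := by
        rw [map_inf, hfg, inf_comm, inf_sSup_eq]
        simp only [iSup_eq_bot]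
        intro s
        exact hmem s
      have h4 : g (sSup A) ⊓ uᶜ = ⊥ := hdense _ h3
      have h5 : g (sSup A) ≤ uᶜᶜ := by
        rw [le_compl_iff_disjoint_right, disjoint_iff]
        exact h4
      calc (g (sSup A))ᶜᶜ ≤ (uᶜᶜ)ᶜᶜ := compl_le_compl (compl_le_compl h5)
        _ = uᶜᶜ := by rw [compl_compl_compl]
    · have h6 : u ≤ (g (sSup A))ᶜᶜ := by
        apply sSup_le
        rintro x ⟨s, hs, rfl⟩
        have : g s ≤ g (sSup A) := hgle (le_trans (hfg s).le (le_sSup hs))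
        exact compl_le_compl (compl_le_compl this)
      calc uᶜᶜ ≤ ((g (sSup A))ᶜᶜ)ᶜᶜ := compl_le_compl (compl_le_compl h6)
        _ = (g (sSup A))ᶜᶜ := by rw [compl_compl_compl]
  · -- beta
    intro a
    apply Heyting.Regular.coe_injective
    simp only [Heyting.Regular.coe_toRegular]
    apply le_antisymm
    · have h1 : g (f a) ≤ aᶜᶜ := key (hfg (f a)).le
      calc (g (f a))ᶜᶜ ≤ (aᶜᶜ)ᶜᶜ := compl_le_compl (compl_le_compl h1)
        _ = aᶜᶜ := by rw [compl_compl_compl]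
    · exact compl_le_compl (compl_le_compl (hgle le_rfl))
  · -- uniqueness
    rintro h' ⟨-, -, -, hbeta⟩
    funext s
    obtain ⟨b, rfl⟩ := hsurj s
    rw [hbeta]
    apply Heyting.Regular.coe_injective
    simp only [Heyting.Regular.coe_toRegular]
    apply le_antisymm
    · have h1 : b ≤ (g (f b))ᶜᶜ := key (OrderHomClass.mono f (hgle le_rfl))
      calc bᶜᶜ ≤ ((g (f b))ᶜᶜ)ᶜᶜ := compl_le_compl (compl_le_compl h1)
        _ = (g (f b))ᶜᶜ := by rw [compl_compl_compl]
    · have h1 : g (f b) ≤ bᶜᶜ := key (hfg (f b)).le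
      calc (g (f b))ᶜᶜ ≤ (bᶜᶜ)ᶜᶜ := compl_le_compl (compl_le_compl h1)
        _ = bᶜᶜ := by rw [compl_compl_compl]
end

section
/- For frames L and M and a frame homomorphism f : L → M, f(a**) ≤ f(a)** holds for all a ∈ L if and only if there exists a (necessarily unique) frame homomorphism f̂ : 𝔅(L) → 𝔅(M) with f̂ ∘ β_L = β_M ∘ f. -/
open Heyting Heyting.Regular

/-- For frames `L`, `M` and a frame homomorphism `f : L → M`, `f(aᶜᶜ) ≤ f(a)ᶜᶜ` holds for
all `a ∈ L` if and only if there exists a (necessarily unique) frame homomorphism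
`f̂ : 𝔅(L) → 𝔅(M)` between the Booleanizations (meets inherited from the ambient frames,
joins `⋁_𝔅 A = (⋁ A)ᶜᶜ`) satisfying `f̂ ∘ β_L = β_M ∘ f`. -/
theorem booleanization_functorial_iff {L M : Type} [Order.Frame L] [Order.Frame M]
    (f : FrameHom L M) :
    (∀ a : L, f (aᶜᶜ) ≤ (f a)ᶜᶜ) ↔
      ∃! g : Heyting.Regular L → Heyting.Regular M,
        (∀ x y : Heyting.Regular L, g (x ⊓ y) = g x ⊓ g y) ∧
        (g ⊤ = ⊤) ∧
        (∀ A : Set (Heyting.Regular L),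
          g (Heyting.Regular.toRegular (sSup (Heyting.Regular.val '' A))) =
            Heyting.Regular.toRegular (sSup (Heyting.Regular.val '' (g '' A)))) ∧
        (∀ a : L, g (Heyting.Regular.toRegular a) = Heyting.Regular.toRegular (f a)) := by
  constructor
  · intro h
    refine ⟨fun x => toRegular (f x.val), ⟨?_, ?_, ?_, ?_⟩, ?_⟩
    · intro x y
      apply coe_injective
      simp only [coe_toRegular, coe_inf]
      show (f (x.val ⊓ y.val))ᶜᶜ = (f x.val)ᶜᶜ ⊓ (f y.val)ᶜᶜ
      rw [map_inf, compl_compl_inf_distrib]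
    · apply coe_injective
      show (f (⊤ : Regular L).val)ᶜᶜ = ⊤
      simp [coe_top]
    · intro A
      apply coe_injective
      simp only [coe_toRegular]
      -- LHS : (f ((sSup S)ᶜᶜ))ᶜᶜ, RHS : (sSup ...)ᶜᶜ
      set S := Heyting.Regular.val '' A with hS
      have himg : Heyting.Regular.val '' ((fun x => toRegular (f x.val)) '' A)
          = (fun a => (f a)ᶜᶜ) '' S := by
        rw [hS, Set.image_image, Set.image_image]
        rfl
      rw [himg]
      apply le_antisymm
      · -- (f ((sSup S)ᶜᶜ))ᶜᶜ ≤ (sSup ((f ·)ᶜᶜ '' S))ᶜᶜ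
        have h1 : f ((sSup S)ᶜᶜ) ≤ (f (sSup S))ᶜᶜ := h _
        have h2 : f (sSup S) ≤ sSup ((fun a => (f a)ᶜᶜ) '' S) := by
          rw [map_sSup]
          apply sSup_le
          rintro b ⟨a, ha, rfl⟩
          exact le_trans le_compl_compl (le_sSup ⟨a, ha, rfl⟩)
        have h1' : (f ((sSup S)ᶜᶜ))ᶜᶜ ≤ ((f (sSup S))ᶜᶜ)ᶜᶜ :=
          compl_le_compl (compl_le_compl h1)
        rw [show ((f (sSup S))ᶜᶜ)ᶜᶜ = (f (sSup S))ᶜᶜ from compl_compl_compl _] at h1'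
        exact h1'.trans (compl_le_compl (compl_le_compl h2))
      · have hT : sSup ((fun a => (f a)ᶜᶜ) '' S) ≤ (f ((sSup S)ᶜᶜ))ᶜᶜ := by
          apply sSup_le
          rintro b ⟨a, ha, rfl⟩
          have : f a ≤ f ((sSup S)ᶜᶜ) :=
            OrderHomClass.mono f (le_trans (le_sSup ha) le_compl_compl)
          exact compl_le_compl (compl_le_compl this)
        have := compl_le_compl (compl_le_compl hT)
        rwa [show ((f ((sSup S)ᶜᶜ))ᶜᶜ)ᶜᶜ = (f ((sSup S)ᶜᶜ))ᶜᶜ from compl_compl_compl _] at this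
    · intro a
      apply coe_injective
      show (f (aᶜᶜ))ᶜᶜ = (f a)ᶜᶜ
      apply le_antisymm
      · have := compl_le_compl (compl_le_compl (h a))
        rwa [show ((f a)ᶜᶜ)ᶜᶜ = (f a)ᶜᶜ from compl_compl_compl _] at this
      · exact compl_le_compl (compl_le_compl (OrderHomClass.mono f le_compl_compl))
    · rintro g' ⟨-, -, -, h4⟩
      funext x
      have := h4 x.val
      rwa [toRegular_coe] at this
  · rintro ⟨g, ⟨-, -, -, h4⟩, -⟩ a
    have h1 := h4 (aᶜᶜ)
    have h2 := h4 a
    have : toRegular (aᶜᶜ) = toRegular a := by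
      apply coe_injective
      simp [compl_compl_compl]
    rw [this, h2] at h1
    have : (f (aᶜᶜ))ᶜᶜ = (f a)ᶜᶜ := congrArg Heyting.Regular.val h1.symm
    calc f (aᶜᶜ) ≤ (f (aᶜᶜ))ᶜᶜ := le_compl_compl
      _ = (f a)ᶜᶜ := this
end
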